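/- Let $\mathbb{D}_\Phi$ be the set of cumulative distribution functions of non-degenerate probability measures on $[0,1]$, and for $F \in \mathbb{D}_\Phi$ define $(\Phi(F))(w) = F(w) - (\mu_F - 1/2)\sigma_F^{-2} \int_{[0,w]}(v-\mu_F)\, dF(v)$, where $\mu_F$ and $\sigma_F^2>0$ are the mean and variance of $F$. If $F_n, F \in \mathbb{D}_\Phi$ and $\|F_n - F\|_\infty \to 0$, then $\|\Phi(F_n) - \Phi(F)\|_\infty \to 0$; i.e., $\Phi : \mathbb{D}_\Phi \to \ell^\infty([0,1])$ is continuous at every $F \in \mathbb{D}_\Phi$ with respect to the supremum norm. -/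

import Mathlib

/-!
Layer-cake formulas express the moments of a measure on `[0,1]` through its distribution
function `F`: `∫_{[0,w]} v dF = w F(w) - ∫_0^w F` and `∫_{[0,1]} v² dF = F(1) - ∫_0^1 F(√t) dt`.
Hence `Φ(F)(w) = F(w) - c (w - μ_F) F(w) + c ∫_0^w F` with `c = (μ_F - 1/2) / σ_F²`, and
`μ_F`, `σ_F²`, `∫_0^w F` all depend continuously on `F` for the sup norm. Uniform limits
commute with products whose limits are bounded, and `σ_F² > 0` makes `c` continuous in `F`.
-/

open MeasureTheory Set Filter

/-- The distribution function of a measure. -/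
noncomputable def cdf01 (μ : Measure ℝ) (w : ℝ) : ℝ := (μ (Iic w)).toReal

/-- The mean of a measure supported on `[0,1]`. -/
noncomputable def mean01 (μ : Measure ℝ) : ℝ := ∫ v in Icc (0:ℝ) 1, v ∂μ

/-- The variance of a measure supported on `[0,1]`. -/
noncomputable def var01 (μ : Measure ℝ) : ℝ :=
  ∫ v in Icc (0:ℝ) 1, (v - mean01 μ)^2 ∂μ

/-- The map `Φ`: `(Φ(F))(w) = F(w) - (μ_F - 1/2) σ_F⁻² ∫_{[0,w]} (v - μ_F) dF(v)`. -/
noncomputable def PhiMap (μ : Measure ℝ) (w : ℝ) : ℝ :=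
  cdf01 μ w - (mean01 μ - 1/2) / var01 μ * ∫ v in Icc (0:ℝ) w, (v - mean01 μ) ∂μ

open Topology Bornology

theorem TendstoUniformlyOn.mul_of_isBounded {ι X M : Type*} [PseudoMetricSpace M] [Zero M]
    [Mul M] [IsBoundedSMul M M] {l : Filter ι} {s : Set X} {F G : ι → X → M} {f g : X → M}
    (hF : TendstoUniformlyOn F f l s) (hG : TendstoUniformlyOn G g l s)
    (hf : IsBounded (f '' s)) (hg : IsBounded (g '' s)) :
    TendstoUniformlyOn (fun n x => F n x * G n x) (fun x => f x * g x) l s := by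
  have hFG : TendstoUniformlyOn (fun n x => (F n x, G n x)) (fun x => (f x, g x)) l s := by
    rw [Metric.tendstoUniformlyOn_iff] at *
    intro ε hε
    filter_upwards [hF ε hε, hG ε hε] with n hFn hGn x hx
    exact max_lt (hFn x hx) (hGn x hx)
  have hmem : ∀ x ∈ s, (f x, g x) ∈ (f '' s) ×ˢ (g '' s) := fun x hx =>
    mk_mem_prod (mem_image_of_mem f hx) (mem_image_of_mem g hx)
  refine ((hf.prod hg).thickening (δ := 1)).uniformContinuousOn_smul
    |>.comp_tendstoUniformlyOn_eventually ?_
      (fun x hx => Metric.self_subset_thickening one_pos _ (hmem x hx)) hFG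
  filter_upwards [Metric.tendstoUniformlyOn_iff.1 hFG 1 one_pos] with n hn x hx
  exact Metric.mem_thickening_iff.2 ⟨_, hmem x hx, by rw [dist_comm]; exact hn x hx⟩

theorem TendstoUniformlyOn.intervalIntegral_primitive {ι E : Type*} [NormedAddCommGroup E]
    [NormedSpace ℝ E] {l : Filter ι} {F : ι → ℝ → E} {f : ℝ → E} {a b : ℝ}
    (hFi : ∀ n, IntegrableOn (F n) (Icc a b)) (hfi : IntegrableOn f (Icc a b))
    (h : TendstoUniformlyOn F f l (Icc a b)) :
    TendstoUniformlyOn (fun n w => ∫ t in a..w, F n t) (fun w => ∫ t in a..w, f t) l (Icc a b) := by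
  rw [Metric.tendstoUniformlyOn_iff]
  intro ε hε
  have hL : 0 < |b - a| + 1 := by positivity
  filter_upwards [Metric.tendstoUniformlyOn_iff.1 h _ (div_pos hε hL)] with n hn w hw
  have hsub : uIcc a w ⊆ Icc a b := uIcc_subset_Icc (left_mem_Icc.2 (hw.1.trans hw.2)) hw
  rw [dist_eq_norm, ← intervalIntegral.integral_sub (hfi.mono_set hsub).intervalIntegrable
    ((hFi n).mono_set hsub).intervalIntegrable]
  have hwa : |w - a| < |b - a| + 1 := by
    rw [abs_of_nonneg (sub_nonneg.2 hw.1), abs_of_nonneg (sub_nonneg.2 (hw.1.trans hw.2))]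
    linarith [hw.2]
  calc ‖∫ t in a..w, (f t - F n t)‖ ≤ ε / (|b - a| + 1) * |w - a| :=
        intervalIntegral.norm_integral_le_of_norm_le_const fun t ht =>
          (dist_eq_norm (f t) (F n t) ▸ hn t (hsub (uIoc_subset_uIcc ht))).le
    _ < ε := by rw [div_mul_eq_mul_div, div_lt_iff₀ hL]; gcongr

theorem MeasureTheory.Integrable.integral_eq_integral_Ioc_meas_lt {α : Type*} [MeasurableSpace α]
    {μ : Measure α} {f : α → ℝ} {M : ℝ} (f_intble : Integrable f μ) (f_nn : 0 ≤ᵐ[μ] f)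
    (f_bdd : f ≤ᵐ[μ] fun _ => M) :
    ∫ ω, f ω ∂μ = ∫ t in Ioc 0 M, μ.real {a | t < f a} := by
  rw [f_intble.integral_eq_integral_Ioc_meas_le f_nn f_bdd]
  refine integral_congr_ae ?_
  filter_upwards [meas_le_ae_eq_meas_lt μ (volume.restrict (Ioc 0 M)) f] with t ht
  exact congrArg ENNReal.toReal ht

lemma cdf01_monotone (μ : Measure ℝ) [IsFiniteMeasure μ] : Monotone (cdf01 μ) :=
  fun _ _ h => ENNReal.toReal_mono (measure_ne_top μ _) (measure_mono (Iic_subset_Iic.2 h))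

lemma cdf01_mem_Icc (μ : Measure ℝ) [IsProbabilityMeasure μ] (w : ℝ) : cdf01 μ w ∈ Icc 0 1 :=
  ⟨measureReal_nonneg, measureReal_le_one⟩

lemma integrableOn_cdf01 (μ : Measure ℝ) [IsFiniteMeasure μ] (a b : ℝ) :
    IntegrableOn (cdf01 μ) (Icc a b) :=
  (cdf01_monotone μ).monotoneOn _ |>.integrableOn_isCompact isCompact_Icc

lemma continuous_integral_cdf01 (μ : Measure ℝ) [IsFiniteMeasure μ] :
    Continuous fun w => ∫ t in 0..w, cdf01 μ t :=
  intervalIntegral.continuous_primitive (fun _ _ => (cdf01_monotone μ).intervalIntegrable) 0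

section Moments

variable {μ : Measure ℝ}

lemma measureReal_Ioc_eq_cdf01_sub [IsFiniteMeasure μ] {t w : ℝ} (h : t ≤ w) :
    μ.real (Ioc t w) = cdf01 μ w - cdf01 μ t := by
  rw [← Iic_sdiff_Iic, measureReal_sdiff (Iic_subset_Iic.2 h) measurableSet_Iic]
  rfl

lemma measureReal_Icc_zero_eq_cdf01 (hs : μ (Icc 0 1)ᶜ = 0) {w : ℝ}
    (hw : 0 ≤ w) : μ.real (Icc 0 w) = cdf01 μ w := by
  have hneg : μ (Iio 0) = 0 :=
    measure_mono_null (fun v (hv : v < 0) (hv' : v ∈ Icc 0 1) => not_le.2 hv hv'.1) hs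
  rw [cdf01, ← Iio_union_Icc_eq_Iic hw,
    measure_union ((Iio_disjoint_Ici le_rfl).mono_right Icc_subset_Ici_self) measurableSet_Icc,
    hneg, zero_add, measureReal_def]

lemma setIntegral_Icc_id_eq [IsFiniteMeasure μ] {w : ℝ} (hw : 0 ≤ w) :
    ∫ v in Icc 0 w, v ∂μ = w * cdf01 μ w - ∫ t in 0..w, cdf01 μ t := by
  have hmem : ∀ᵐ v ∂μ.restrict (Icc 0 w), v ∈ Icc 0 w := ae_restrict_mem measurableSet_Icc
  rw [Integrable.integral_eq_integral_Ioc_meas_lt (f := fun v => v) (M := w)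
    continuous_id.integrableOn_Icc (hmem.mono fun v hv => hv.1) (hmem.mono fun v hv => hv.2),
    ← intervalIntegral.integral_of_le hw]
  have hlevel : ∀ t ∈ uIoc 0 w, (μ.restrict (Icc 0 w)).real {a | t < a}
      = cdf01 μ w - cdf01 μ t := by
    intro t ht
    rw [uIoc_of_le hw] at ht
    rw [show {a : ℝ | t < a} = Ioi t from rfl, measureReal_restrict_apply measurableSet_Ioi,
      ← measureReal_Ioc_eq_cdf01_sub ht.2]
    congr 1
    ext v
    simp only [mem_inter_iff, mem_Ioi, mem_Icc, mem_Ioc]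
    grind
  rw [intervalIntegral.integral_congr_ae (.of_forall hlevel), intervalIntegral.integral_sub
    intervalIntegrable_const (cdf01_monotone μ).intervalIntegrable,
    intervalIntegral.integral_const, sub_zero, smul_eq_mul]

lemma setIntegral_Icc_sq_eq [IsFiniteMeasure μ] :
    ∫ v in Icc 0 1, v ^ 2 ∂μ = cdf01 μ 1 - ∫ t in 0..1, cdf01 μ (Real.sqrt t) := by
  have hmem : ∀ᵐ v ∂μ.restrict (Icc 0 1), v ∈ Icc 0 1 := ae_restrict_mem measurableSet_Icc
  rw [Integrable.integral_eq_integral_Ioc_meas_lt (M := 1) (continuous_pow 2).integrableOn_Icc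
    (.of_forall fun v => sq_nonneg v) (hmem.mono fun v hv => pow_le_one₀ hv.1 hv.2),
    ← intervalIntegral.integral_of_le zero_le_one]
  have hlevel : ∀ t ∈ uIoc 0 1, (μ.restrict (Icc 0 1)).real {a | t < a ^ 2}
      = cdf01 μ 1 - cdf01 μ (Real.sqrt t) := by
    intro t ht
    rw [uIoc_of_le zero_le_one] at ht
    rw [measureReal_restrict_apply
        (measurableSet_lt measurable_const (continuous_pow 2).measurable),
      ← measureReal_Ioc_eq_cdf01_sub (Real.sqrt_le_one.2 ht.2)]
    congr 1
    ext v
    simp only [mem_inter_iff, mem_ofPred_eq, mem_Icc, mem_Ioc]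
    constructor
    · rintro ⟨htv, hv0, hv1⟩
      exact ⟨(Real.sqrt_lt ht.1.le hv0).2 htv, hv1⟩
    · rintro ⟨htv, hv1⟩
      have hv0 : 0 ≤ v := (Real.sqrt_nonneg t).trans htv.le
      exact ⟨(Real.sqrt_lt ht.1.le hv0).1 htv, hv0, hv1⟩
  rw [intervalIntegral.integral_congr_ae (.of_forall hlevel), intervalIntegral.integral_sub
    intervalIntegrable_const (Monotone.intervalIntegrable (u := fun t => cdf01 μ (Real.sqrt t))
      fun _ _ h => cdf01_monotone μ (Real.sqrt_le_sqrt h)),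
    intervalIntegral.integral_const, sub_zero, one_smul]

noncomputable def phiCoeff (μ : Measure ℝ) : ℝ := (mean01 μ - 1/2) / var01 μ

lemma mean01_eq [IsFiniteMeasure μ] : mean01 μ = cdf01 μ 1 - ∫ t in 0..1, cdf01 μ t := by
  rw [mean01, setIntegral_Icc_id_eq zero_le_one, one_mul]

lemma var01_eq [IsProbabilityMeasure μ] (hs : μ (Icc 0 1)ᶜ = 0) :
    var01 μ = ∫ v in Icc 0 1, v ^ 2 ∂μ - mean01 μ ^ 2 := by
  have hunit : μ.real (Icc 0 1) = 1 := by
    rw [measureReal_def, (prob_compl_eq_zero_iff measurableSet_Icc).1 hs, ENNReal.toReal_one]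
  simp_rw [var01, sub_sq]
  rw [integral_add ?_ (integrable_const _), integral_sub ?_ ?_, integral_mul_const,
    integral_const_mul, setIntegral_const, hunit, ← mean01]
  · ring
  all_goals exact Continuous.integrableOn_Icc (by fun_prop)

lemma PhiMap_eq [IsFiniteMeasure μ] (hs : μ (Icc 0 1)ᶜ = 0) {w : ℝ} (hw : 0 ≤ w) :
    PhiMap μ w = cdf01 μ w - phiCoeff μ * (w - mean01 μ) * cdf01 μ w
      + phiCoeff μ * ∫ t in 0..w, cdf01 μ t := by
  rw [PhiMap, integral_sub continuous_id'.integrableOn_Icc (integrable_const _),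
    setIntegral_const, setIntegral_Icc_id_eq hw, measureReal_Icc_zero_eq_cdf01 hs hw, phiCoeff]
  ring

end Moments

section Convergence

variable {ι : Type*} {l : Filter ι} {μs : ι → Measure ℝ} {μ : Measure ℝ}

lemma tendstoUniformlyOn_integral_cdf01 [∀ i, IsFiniteMeasure (μs i)] [IsFiniteMeasure μ]
    (hconv : TendstoUniformlyOn (fun i => cdf01 (μs i)) (cdf01 μ) l (Icc 0 1)) :
    TendstoUniformlyOn (fun i w => ∫ t in 0..w, cdf01 (μs i) t) (fun w => ∫ t in 0..w, cdf01 μ t)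
      l (Icc 0 1) :=
  hconv.intervalIntegral_primitive (fun i => integrableOn_cdf01 (μs i) 0 1)
    (integrableOn_cdf01 μ 0 1)

lemma tendsto_mean01 [∀ i, IsFiniteMeasure (μs i)] [IsFiniteMeasure μ]
    (hconv : TendstoUniformlyOn (fun i => cdf01 (μs i)) (cdf01 μ) l (Icc 0 1)) :
    Tendsto (fun i => mean01 (μs i)) l (𝓝 (mean01 μ)) := by
  have h1 : (1 : ℝ) ∈ Icc 0 1 := right_mem_Icc.2 zero_le_one
  simp only [mean01_eq]
  exact (hconv.tendsto_at h1).sub ((tendstoUniformlyOn_integral_cdf01 hconv).tendsto_at h1)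

lemma tendsto_setIntegral_sq [∀ i, IsFiniteMeasure (μs i)] [IsFiniteMeasure μ]
    (hconv : TendstoUniformlyOn (fun i => cdf01 (μs i)) (cdf01 μ) l (Icc 0 1)) :
    Tendsto (fun i => ∫ v in Icc 0 1, v ^ 2 ∂μs i) l (𝓝 (∫ v in Icc 0 1, v ^ 2 ∂μ)) := by
  have h1 : (1 : ℝ) ∈ Icc 0 1 := right_mem_Icc.2 zero_le_one
  have hsqrt : MapsTo Real.sqrt (Icc 0 1) (Icc 0 1) := fun t ht =>
    ⟨Real.sqrt_nonneg t, Real.sqrt_le_one.2 ht.2⟩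
  have hint (ν : Measure ℝ) [IsFiniteMeasure ν] : IntegrableOn (cdf01 ν ∘ Real.sqrt) (Icc 0 1) :=
    (cdf01_monotone ν).comp (fun _ _ h => Real.sqrt_le_sqrt h) |>.monotoneOn _
      |>.integrableOn_isCompact isCompact_Icc
  have hprim := ((hconv.comp Real.sqrt).mono hsqrt).intervalIntegral_primitive
    (fun i => hint (μs i)) (hint μ)
  simp only [setIntegral_Icc_sq_eq]
  exact (hconv.tendsto_at h1).sub (hprim.tendsto_at h1)

lemma tendsto_var01 [∀ i, IsProbabilityMeasure (μs i)] [IsProbabilityMeasure μ]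
    (hsn : ∀ i, μs i (Icc 0 1)ᶜ = 0) (hs : μ (Icc 0 1)ᶜ = 0)
    (hconv : TendstoUniformlyOn (fun i => cdf01 (μs i)) (cdf01 μ) l (Icc 0 1)) :
    Tendsto (fun i => var01 (μs i)) l (𝓝 (var01 μ)) := by
  simp only [var01_eq (hsn _), var01_eq hs]
  exact (tendsto_setIntegral_sq hconv).sub ((tendsto_mean01 hconv).pow 2)

end Convergence

theorem PhiMap_continuous_general
    (μn : ℕ → Measure ℝ) (μ : Measure ℝ)
    [∀ n, IsProbabilityMeasure (μn n)] [IsProbabilityMeasure μ]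
    (hsn : ∀ n, μn n (Icc (0:ℝ) 1)ᶜ = 0) (hs : μ (Icc (0:ℝ) 1)ᶜ = 0)
    (hvar : 0 < var01 μ)
    (hconv : TendstoUniformlyOn (fun n w => cdf01 (μn n) w) (cdf01 μ) atTop (Icc (0:ℝ) 1)) :
    TendstoUniformlyOn (fun n w => PhiMap (μn n) w) (PhiMap μ) atTop (Icc (0:ℝ) 1) := by
  have hbdd (f : ℝ → ℝ) (hf : Continuous f) : IsBounded (f '' Icc 0 1) :=
    (isCompact_Icc.image hf).isBounded
  have hc : Tendsto (fun n => phiCoeff (μn n)) atTop (𝓝 (phiCoeff μ)) :=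
    ((tendsto_mean01 hconv).sub_const _).div (tendsto_var01 hsn hs hconv) hvar.ne'
  have hC := hc.tendstoUniformlyOn_const (Icc (0:ℝ) 1)
  have hid : TendstoUniformlyOn (fun (_ : ℕ) (w : ℝ) => w) id atTop (Icc 0 1) :=
    fun _ hu => .of_forall fun _ _ _ => refl_mem_uniformity hu
  have hcentered := hid.fun_sub ((tendsto_mean01 hconv).tendstoUniformlyOn_const (Icc (0:ℝ) 1))
  have hcdf : IsBounded (cdf01 μ '' Icc 0 1) :=
    Metric.isBounded_Icc 0 1 |>.subset (image_subset_iff.2 fun w _ => cdf01_mem_Icc μ w)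
  have hslope := hC.mul_of_isBounded hcentered (hbdd _ (by fun_prop)) (hbdd _ (by fun_prop))
  have hlim := (hconv.fun_sub (hslope.mul_of_isBounded hconv (hbdd _ (by fun_prop)) hcdf)).fun_add
    (hC.mul_of_isBounded (tendstoUniformlyOn_integral_cdf01 hconv) (hbdd _ (by fun_prop))
      (hbdd _ (continuous_integral_cdf01 μ)))
  refine (hlim.congr ?_).congr_right ?_
  · exact .of_forall fun n w hw => (PhiMap_eq (hsn n) hw.1).symm
  · exact fun w hw => (PhiMap_eq hs hw.1).symm

/-- `Φ` is continuous with respect to the supremum norm on `[0,1]`. -/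
theorem PhiMap_continuous
    (μn : ℕ → Measure ℝ) (μ : Measure ℝ)
    [∀ n, IsProbabilityMeasure (μn n)] [IsProbabilityMeasure μ]
    (hsn : ∀ n, μn n (Icc (0:ℝ) 1)ᶜ = 0) (hs : μ (Icc (0:ℝ) 1)ᶜ = 0)
    (hvarn : ∀ n, 0 < var01 (μn n)) (hvar : 0 < var01 μ)
    (hconv : TendstoUniformlyOn (fun n w => cdf01 (μn n) w) (cdf01 μ) atTop (Icc (0:ℝ) 1)) :
    TendstoUniformlyOn (fun n w => PhiMap (μn n) w) (PhiMap μ) atTop (Icc (0:ℝ) 1) :=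
  PhiMap_continuous_general μn μ hsn hs hvar hconv
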